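/- arXiv:1911.06519 — 2 statements merged into one kernel-verified Lean document; each statement's English description precedes it below -/
import Mathlib

section
/- Let Ω ⊆ ℝ² be a compact set with nonempty boundary and let b(x) be the signed distance to Ω (positive outside, negative inside). If b is differentiable at x with b(x) ≠ 0, then there is a unique closest point P(x) ∈ ∂Ω to x, and ∇b(x) = (x − P(x))/b(x). In particular ‖∇b(x)‖ = 1. -/
/-!
Fix a closest boundary point `P` of `x`. Since `|b y| = infDist y ∂Ω ≤ dist y P` everywhere, with
equality at `x`, the function `sign (b x) • b` touches the smooth function `dist · P` from below at
`x`. Hence their gradients agree there, giving `∇b(x) = (x - P) / b(x)`; this formula has norm one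
and determines `P`, which is therefore unique.
-/

open Classical

open Metric InnerProductSpace Topology

section

variable {E : Type*} [NormedAddCommGroup E] [InnerProductSpace ℝ E] [CompleteSpace E]

theorem HasGradientAt.neg {f : E → ℝ} {f' x : E} (hf : HasGradientAt f f' x) :
    HasGradientAt (fun y => -f y) (-f') x := by
  rw [hasGradientAt_iff_hasFDerivAt, map_neg] at *
  exact hf.neg

theorem hasGradientAt_dist {x P : E} (h : x ≠ P) :
    HasGradientAt (fun y => dist y P) ((dist x P)⁻¹ • (x - P)) x := by
  have hsq : HasFDerivAt (fun y => ‖y - P‖ ^ 2) (2 • innerSL ℝ (x - P)) x := by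
    simpa using ((hasFDerivAt_id x).sub_const P).norm_sq
  have hpos : ‖x - P‖ ^ 2 ≠ 0 := by simpa [sub_eq_zero] using h
  rw [hasGradientAt_iff_hasFDerivAt]
  have hsqrt := hsq.sqrt hpos
  simp only [Real.sqrt_sq_eq_abs, ← dist_eq_norm, abs_dist] at hsqrt
  refine hsqrt.congr_fderiv ?_
  ext v
  simp only [one_div, mul_inv_rev, map_sub, smul_apply, sub_apply, coe_innerSL_apply,
    nsmul_eq_mul, Nat.cast_ofNat, smul_eq_mul, map_smul, toDual_apply_apply]
  field_simp

theorem HasGradientAt.eq_of_eventually_le_of_eq {f g : E → ℝ} {f' g' x : E}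
    (hf : HasGradientAt f f' x) (hg : HasGradientAt g g' x)
    (hle : ∀ᶠ y in 𝓝 x, f y ≤ g y) (heq : f x = g x) : f' = g' := by
  have hmin : IsLocalMin (fun y => g y - f y) x :=
    hle.mono fun y hy => by simp only [heq, sub_self, sub_nonneg, hy]
  rw [hasGradientAt_iff_hasFDerivAt] at hf hg
  exact ((toDual ℝ E).injective (sub_eq_zero.mp (hmin.hasFDerivAt_eq_zero (hg.sub hf)))).symm

theorem HasGradientAt.eq_of_le_dist_of_eq {b : E → ℝ} {b' x P : E} (hb : HasGradientAt b b' x)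
    (hle : ∀ y, b y ≤ dist y P) (hx : b x = dist x P) (hpos : 0 < b x) :
    b' = (b x)⁻¹ • (x - P) := by
  have hxP : x ≠ P := dist_pos.mp (hx ▸ hpos)
  rw [hx]
  exact hb.eq_of_eventually_le_of_eq (hasGradientAt_dist hxP) (.of_forall hle) hx

theorem gradient_eq_of_abs_le_dist {b : E → ℝ} {x P : E} (hb : DifferentiableAt ℝ b x)
    (hle : ∀ y, |b y| ≤ dist y P) (hx : |b x| = dist x P) (hbx : b x ≠ 0) :
    gradient b x = (b x)⁻¹ • (x - P) := by
  rcases hbx.lt_or_gt with hneg | hpos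
  · have h := hb.hasGradientAt.neg.eq_of_le_dist_of_eq (fun y => (neg_le_abs _).trans (hle y))
      (by rw [← hx, abs_of_neg hneg]) (neg_pos.mpr hneg)
    rwa [inv_neg, neg_smul, neg_inj] at h
  · exact hb.hasGradientAt.eq_of_le_dist_of_eq (fun y => (le_abs_self _).trans (hle y))
      (by rw [← hx, abs_of_pos hpos]) hpos

end

/-- Signed distance to a compact set `Ω` (positive outside, negative inside):
if `b` is differentiable at `x` with `b x ≠ 0`, then there is a unique closest
point `P ∈ ∂Ω` to `x`, and `∇b(x) = (x − P)/b(x)`; in particular `‖∇b(x)‖ = 1`. -/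
theorem signed_distance_gradient
    (Ω : Set (EuclideanSpace ℝ (Fin 2))) (hΩ : IsCompact Ω)
    (hfr : (frontier Ω).Nonempty)
    (b : EuclideanSpace ℝ (Fin 2) → ℝ)
    (hb : ∀ y, b y = if y ∈ Ω then -(infDist y (frontier Ω)) else infDist y (frontier Ω))
    (x : EuclideanSpace ℝ (Fin 2))
    (hdiff : DifferentiableAt ℝ b x) (hbx : b x ≠ 0) :
    (∃! P, P ∈ frontier Ω ∧ dist x P = infDist x (frontier Ω)) ∧
    (∀ P, P ∈ frontier Ω ∧ dist x P = infDist x (frontier Ω) →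
      gradient b x = (b x)⁻¹ • (x - P)) ∧
    ‖gradient b x‖ = 1 := by
  have habs (y) : |b y| = infDist y (frontier Ω) := by
    rw [hb y]; split_ifs <;> simp [abs_of_nonneg infDist_nonneg]
  have hgrad : ∀ P, P ∈ frontier Ω ∧ dist x P = infDist x (frontier Ω) →
      gradient b x = (b x)⁻¹ • (x - P) := fun P ⟨hP, hxP⟩ =>
    gradient_eq_of_abs_le_dist hdiff (fun y => (habs y).trans_le (infDist_le_dist_of_mem hP))
      ((habs x).trans hxP.symm) hbx
  have hK : IsCompact (frontier Ω) :=
    hΩ.of_isClosed_subset isClosed_frontier hΩ.isClosed.frontier_subset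
  obtain ⟨P, hP, hxP⟩ := hK.exists_infDist_eq_dist hfr x
  have hPmin : P ∈ frontier Ω ∧ dist x P = infDist x (frontier Ω) := ⟨hP, hxP.symm⟩
  refine ⟨⟨P, hPmin, fun Q hQ => ?_⟩, hgrad, ?_⟩
  · have h := (hgrad Q hQ).symm.trans (hgrad P hPmin)
    exact sub_right_injective (smul_right_injective _ (inv_ne_zero hbx) h)
  · rw [hgrad P hPmin, norm_smul, norm_inv, ← dist_eq_norm, Real.norm_eq_abs, habs, hxP,
      inv_mul_cancel₀ (by rw [← hxP, ← habs]; exact abs_ne_zero.mpr hbx)]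
end

section
/- Let c_r > 0 and z = (p_x, p_y, v_x, v_y) ∈ ℝ⁴ with (v_x, v_y) ≠ 0 and with the quantity D(z) := (v_x² + v_y²)ψ(z) + (p_x v_x + p_y v_y) ≠ 0, where ψ is the smaller root of (v_x² + v_y²)t² + 2(p_x v_x + p_y v_y)t + (p_x² + p_y² − c_r²) = 0 (assumed real). Then ψ is differentiable at z and ∂ψ/∂p_x = −(v_x ψ + p_x)/D, ∂ψ/∂p_y = −(v_y ψ + p_y)/D, ∂ψ/∂v_x = −(v_x ψ² + p_x ψ)/D, ∂ψ/∂v_y = −(v_y ψ² + p_y ψ)/D. -/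
/-!
With `a = v_x² + v_y²`, `b = p_x v_x + p_y v_y`, `c = p_x² + p_y² - c_r²`, the function `ψ` is the
root `(-b - √Δ)/a`, `Δ = b² - a c`, of `a t² + 2 b t + c`, and `D = a ψ + b = -√Δ`. So `D ≠ 0` forces
`a ≠ 0` (if `v = 0` then `b = 0` and `D = 0`) and `Δ > 0`, and `ψ` is differentiable by the chain
rule. Using `(√Δ)² = Δ`, the chain-rule derivative rearranges into the formula
`ψ' = -(a' ψ² + 2 b' ψ + c') / (2 D)` of implicit differentiation.
-/

/-- A root of `a t² + 2 b t + c`, the smaller one when `a > 0`. -/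
noncomputable def smallerRoot (a b c : ℝ) : ℝ := (-b - √(b ^ 2 - a * c)) / a

theorem mul_smallerRoot_add {a b c : ℝ} (ha : a ≠ 0) :
    a * smallerRoot a b c + b = -√(b ^ 2 - a * c) := by
  unfold smallerRoot
  field_simp
  ring

theorem sq_sub_mul_pos_of_mul_smallerRoot_add_ne_zero {a b c : ℝ} (ha : a ≠ 0)
    (h : a * smallerRoot a b c + b ≠ 0) : 0 < b ^ 2 - a * c := by
  rw [mul_smallerRoot_add ha, neg_ne_zero] at h
  exact Real.sqrt_ne_zero'.mp h

theorem hasFDerivAt_smallerRoot {E : Type*} [NormedAddCommGroup E] [NormedSpace ℝ E]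
    {a b c ψ : E → ℝ} {a' b' c' : E →L[ℝ] ℝ} {x : E}
    (ha : HasFDerivAt a a' x) (hb : HasFDerivAt b b' x) (hc : HasFDerivAt c c' x)
    (hψ : ∀ y, ψ y = smallerRoot (a y) (b y) (c y))
    (ha0 : a x ≠ 0) (hD : a x * ψ x + b x ≠ 0) :
    HasFDerivAt ψ ((-(2 * (a x * ψ x + b x))⁻¹) • (ψ x ^ 2 • a' + (2 * ψ x) • b' + c')) x := by
  obtain rfl : ψ = fun y => smallerRoot (a y) (b y) (c y) := funext hψ
  have hΔ := sq_sub_mul_pos_of_mul_smallerRoot_add_ne_zero ha0 hD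
  have hDs : a x * smallerRoot (a x) (b x) (c x) + b x = -√(b x ^ 2 - a x * c x) :=
    mul_smallerRoot_add ha0
  have hψ' := ((hb.neg.sub (((hb.pow 2).sub (ha.mul hc)).sqrt hΔ.ne')).mul
    ((hasDerivAt_inv ha0).comp_hasFDerivAt x ha))
  rw [hDs]
  refine hψ'.congr_fderiv (ContinuousLinearMap.ext fun v => ?_)
  simp only [smallerRoot, Pi.sub_apply, Pi.mul_apply, Pi.neg_apply, Function.comp_apply, add_apply,
    sub_apply, neg_apply, smul_apply, smul_eq_mul, nsmul_eq_mul]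
  have hs0 := (Real.sqrt_pos.mpr hΔ).ne'
  have hs2 := Real.sq_sqrt hΔ.le
  generalize √(b x ^ 2 - a x * c x) = s at hs0 hs2 ⊢
  field_simp
  linear_combination (a' v) * hs2

theorem psi_partial_derivatives_general
    (c_r : ℝ)
    (Ψ : EuclideanSpace ℝ (Fin 4) → ℝ)
    (hΨ : ∀ z : EuclideanSpace ℝ (Fin 4), Ψ z =
      (-(z 0 * z 2 + z 1 * z 3) -
        Real.sqrt ((z 0 * z 2 + z 1 * z 3)^2 -
          ((z 2)^2 + (z 3)^2) * ((z 0)^2 + (z 1)^2 - c_r^2))) / ((z 2)^2 + (z 3)^2))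
    (z : EuclideanSpace ℝ (Fin 4))
    (D : ℝ) (hDdef : D = ((z 2)^2 + (z 3)^2) * Ψ z + (z 0 * z 2 + z 1 * z 3))
    (hD : D ≠ 0) :
    DifferentiableAt ℝ Ψ z ∧
    fderiv ℝ Ψ z (EuclideanSpace.single 0 1) = -(z 2 * Ψ z + z 0) / D ∧
    fderiv ℝ Ψ z (EuclideanSpace.single 1 1) = -(z 3 * Ψ z + z 1) / D ∧
    fderiv ℝ Ψ z (EuclideanSpace.single 2 1) = -(z 2 * (Ψ z)^2 + z 0 * Ψ z) / D ∧
    fderiv ℝ Ψ z (EuclideanSpace.single 3 1) = -(z 3 * (Ψ z)^2 + z 1 * Ψ z) / D := by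
  subst hDdef
  have hv : z 2 ^ 2 + z 3 ^ 2 ≠ 0 := by
    intro hv
    obtain ⟨h2, h3⟩ : z 2 = 0 ∧ z 3 = 0 := by
      constructor <;> nlinarith [sq_nonneg (z 2), sq_nonneg (z 3)]
    exact hD (by simp [h2, h3])
  have hcoord (i : Fin 4) := PiLp.hasFDerivAt_apply (𝕜 := ℝ) 2 z i
  have hΨ' := hasFDerivAt_smallerRoot (((hcoord 2).pow 2).add ((hcoord 3).pow 2))
    (((hcoord 0).mul (hcoord 2)).add ((hcoord 1).mul (hcoord 3)))
    ((((hcoord 0).pow 2).add ((hcoord 1).pow 2)).sub_const (c_r ^ 2)) hΨ hv hD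
  refine ⟨hΨ'.differentiableAt, ?_, ?_, ?_, ?_⟩ <;>
  · rw [hΨ'.fderiv]
    simp only [Pi.add_apply, Pi.mul_apply, add_apply, smul_apply, PiLp.proj_apply,
      PiLp.single_apply, Fin.reduceEq, ↓reduceIte, smul_eq_mul, nsmul_eq_mul]
    field_simp
    ring

/-- Partial derivatives of the time-to-reach function `ψ`, obtained by implicit
differentiation of its defining quadratic, where `z = (p_x, p_y, v_x, v_y) ∈ ℝ⁴`
and `D(z) = (v_x²+v_y²)ψ(z) + (p_x v_x + p_y v_y) ≠ 0`. -/
theorem psi_partial_derivatives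
    (c_r : ℝ) (hc : 0 < c_r)
    (Ψ : EuclideanSpace ℝ (Fin 4) → ℝ)
    (hΨ : ∀ z : EuclideanSpace ℝ (Fin 4), Ψ z =
      (-(z 0 * z 2 + z 1 * z 3) -
        Real.sqrt ((z 0 * z 2 + z 1 * z 3)^2 -
          ((z 2)^2 + (z 3)^2) * ((z 0)^2 + (z 1)^2 - c_r^2))) / ((z 2)^2 + (z 3)^2))
    (z : EuclideanSpace ℝ (Fin 4))
    (hv : ¬(z 2 = 0 ∧ z 3 = 0))
    (hΔ : 0 ≤ (z 0 * z 2 + z 1 * z 3)^2 - ((z 2)^2 + (z 3)^2) * ((z 0)^2 + (z 1)^2 - c_r^2))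
    (D : ℝ) (hDdef : D = ((z 2)^2 + (z 3)^2) * Ψ z + (z 0 * z 2 + z 1 * z 3))
    (hD : D ≠ 0) :
    DifferentiableAt ℝ Ψ z ∧
    fderiv ℝ Ψ z (EuclideanSpace.single 0 1) = -(z 2 * Ψ z + z 0) / D ∧
    fderiv ℝ Ψ z (EuclideanSpace.single 1 1) = -(z 3 * Ψ z + z 1) / D ∧
    fderiv ℝ Ψ z (EuclideanSpace.single 2 1) = -(z 2 * (Ψ z)^2 + z 0 * Ψ z) / D ∧
    fderiv ℝ Ψ z (EuclideanSpace.single 3 1) = -(z 3 * (Ψ z)^2 + z 1 * Ψ z) / D :=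
  psi_partial_derivatives_general c_r Ψ hΨ z D hDdef hD
end
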